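/- Let n ≥ 2, 0 < σ < 2, λ ∈ ℝ, δ > 0, and let W ∈ C^{1,1}_loc(ℝⁿ) ∩ L_σ be anti-symmetric about T_λ (W(x^λ) = -W(x) for all x). There exists a constant c > 0 depending only on n and σ with the following property: if W attains its minimum over Σ_λ at a point x̄ with λ - δ < x̄₁ < λ and W(x̄) < 0, then (-Δ)^{σ/2}W(x̄) ≤ c · C_{n,σ} · δ^{-σ} · W(x̄) < 0. -/

import Mathlib

open MeasureTheory Filter Metric Set Bornology

noncomputable section

/-- The space `ℝⁿ`. -/
abbrev En (n : ℕ) := EuclideanSpace ℝ (Fin n)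

/-- Membership in the weighted space `L_σ`. -/
def MemL (n : ℕ) (σ : ℝ) (w : En n → ℝ) : Prop :=
  LocallyIntegrable w volume ∧
    Integrable (fun x : En n => |w x| / (1 + ‖x‖ ^ ((n : ℝ) + σ))) volume

/-- `C^{1,1}_loc` on an open set `Ω`: near every point of `Ω`, `w` is
differentiable with Lipschitz-continuous derivative. -/
def C11locOn (n : ℕ) (Ω : Set (En n)) (w : En n → ℝ) : Prop :=
  ∀ x ∈ Ω, ∃ ε > 0, ∃ K : NNReal, ball x ε ⊆ Ω ∧
    (∀ y ∈ ball x ε, DifferentiableAt ℝ w y) ∧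
    LipschitzOnWith K (fderiv ℝ w) (ball x ε)

/-- `C^{1,1}_loc` on all of `ℝⁿ`. -/
def C11loc (n : ℕ) (w : En n → ℝ) : Prop := C11locOn n univ w

/-- `HasFracLap n σ c w x L` : the fractional Laplacian `(-Δ)^{σ/2} w`, with
normalization constant `c = C_{n,σ} > 0`, exists at `x` as a principal value
and is equal to `L`. -/
def HasFracLap (n : ℕ) (σ c : ℝ) (w : En n → ℝ) (x : En n) (L : ℝ) : Prop :=
  Tendsto
    (fun ε : ℝ => c * ∫ y in {y : En n | ε ≤ dist x y},
        (w x - w y) / dist x y ^ ((n : ℝ) + σ))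
    (nhdsWithin 0 (Ioi 0)) (nhds L)

/-- Reflection `x ↦ x^λ` about the hyperplane `T_λ = {x : x₁ = λ}`. -/
def reflPt (n : ℕ) [NeZero n] (l : ℝ) (x : En n) : En n :=
  WithLp.toLp 2 (fun i => if i = 0 then 2 * l - x 0 else x i)

/-- The half space `Σ_λ = {x : x₁ < λ}`. -/
def halfSpace (n : ℕ) [NeZero n] (l : ℝ) : Set (En n) := {x | x 0 < l}

/-!
The far part of the truncated integral, outside `Σ_λ`, is reflected across `T_λ`: it becomes
an integral over the closed half space of `(W x̄ + W z) |x̄^λ - z|^{-n-σ}`. On `Σ_λ` minimality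
gives `W x̄ - W y ≤ 0`, and `|x̄ - y| ≤ |x̄^λ - y|`, so the kernel may be replaced by the reflected
one. The two integrands then add up to `2 W x̄ |x̄^λ - y|^{-n-σ}`, up to a nonpositive remainder
near `x̄` (where `W < 0` by continuity) and on `T_λ` (where `W = 0`). Finally the ball of radius
`δ/2` centred `2δ` below `x̄` in the `x₁`-direction lies in `Σ_λ` within distance `5δ` of `x̄^λ`,
which bounds the reflected kernel mass from below by a multiple of `δ^{-σ}`.
-/

section ReflPt

variable {n : ℕ}

lemma abs_sub_apply_le_dist (x y : En n) (i : Fin n) : |x i - y i| ≤ dist x y :=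
  PiLp.dist_apply_le x y i

variable [NeZero n]

@[simp] lemma reflPt_apply_zero (l : ℝ) (x : En n) : reflPt n l x 0 = 2 * l - x 0 := by
  simp [reflPt]

lemma reflPt_apply_of_ne (l : ℝ) (x : En n) {i : Fin n} (hi : i ≠ 0) : reflPt n l x i = x i := by
  simp [reflPt, hi]

lemma reflPt_involutive (l : ℝ) : Function.Involutive (reflPt n l) := by
  intro x; ext i
  rcases eq_or_ne i 0 with rfl | hi
  · simp
  · simp [reflPt_apply_of_ne _ _ hi]

lemma reflPt_eq_self {l : ℝ} {x : En n} (hx : x 0 = l) : reflPt n l x = x := by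
  ext i
  rcases eq_or_ne i 0 with rfl | hi
  · simp [hx]; ring
  · simp [reflPt_apply_of_ne _ _ hi]

lemma dist_reflPt_reflPt (l : ℝ) (x y : En n) :
    dist (reflPt n l x) (reflPt n l y) = dist x y := by
  simp only [EuclideanSpace.dist_eq]
  congr 1
  refine Finset.sum_congr rfl fun i _ => ?_
  rcases eq_or_ne i 0 with rfl | hi
  · simp only [reflPt_apply_zero, Real.dist_eq, sq_abs]
    ring
  · simp [reflPt_apply_of_ne _ _ hi]

lemma isometry_reflPt (l : ℝ) : Isometry (reflPt n l) :=
  Isometry.of_dist_eq (dist_reflPt_reflPt l)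

lemma measurePreserving_reflPt (l : ℝ) : MeasurePreserving (reflPt n l) := by
  have hcoord (i : Fin n) : MeasurePreserving (fun t : ℝ => if i = 0 then 2 * l - t else t) := by
    split_ifs
    · exact Measure.measurePreserving_sub_left volume _
    · exact MeasurePreserving.id volume
  convert (PiLp.volume_preserving_toLp (Fin n)).comp
    ((volume_preserving_pi hcoord).comp (PiLp.volume_preserving_ofLp (Fin n))) using 1
  funext x; ext i
  rcases eq_or_ne i 0 with rfl | hi
  · simp
  · simp [reflPt_apply_of_ne _ _ hi, hi]

lemma dist_le_dist_reflPt {l : ℝ} {x y : En n} (hx : x 0 ≤ l) (hy : y 0 ≤ l) :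
    dist x y ≤ dist (reflPt n l x) y := by
  simp only [EuclideanSpace.dist_eq]
  gcongr with i
  rcases eq_or_ne i 0 with rfl | hi
  · simp only [reflPt_apply_zero, Real.dist_eq]
    exact abs_le_abs (by linarith) (by linarith)
  · simp [reflPt_apply_of_ne _ _ hi]

lemma dist_reflPt_self (l : ℝ) (x : En n) : dist (reflPt n l x) x = 2 * |l - x 0| := by
  rw [EuclideanSpace.dist_eq, Finset.sum_eq_single 0 (fun i _ hi => by
    simp [reflPt_apply_of_ne _ _ hi]) (by simp), Real.sqrt_sq dist_nonneg, reflPt_apply_zero,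
    Real.dist_eq, ← abs_two, ← abs_mul]
  ring_nf

lemma sub_le_dist_reflPt {l : ℝ} {x z : En n} (hz : z 0 ≤ l) : l - x 0 ≤ dist (reflPt n l x) z :=
  calc l - x 0 ≤ |reflPt n l x 0 - z 0| := by
        rw [reflPt_apply_zero]; exact le_abs.2 (.inl (by linarith))
    _ ≤ dist (reflPt n l x) z := abs_sub_apply_le_dist _ _ _

end ReflPt

section Integrability

variable {E : Type*} [NormedAddCommGroup E]

lemma one_add_norm_le_mul_dist {a y : E} {r : ℝ} (hr : 0 < r) (hy : r ≤ dist a y) :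
    1 + ‖y‖ ≤ (1 + (1 + ‖a‖) / r) * dist a y := by
  have hya : ‖y‖ ≤ ‖a‖ + dist a y := by
    rw [dist_comm, dist_eq_norm]; exact norm_le_insert' y a
  have : 1 + ‖a‖ ≤ (1 + ‖a‖) / r * dist a y := by
    rw [div_mul_eq_mul_div, le_div_iff₀ hr]; gcongr
  linarith

lemma inv_rpow_dist_le {a y : E} {r p : ℝ} (hr : 0 < r) (hy : r ≤ dist a y) (hp : 0 ≤ p) :
    (dist a y ^ p)⁻¹ ≤ (1 + (1 + ‖a‖) / r) ^ p * ((1 + ‖y‖) ^ p)⁻¹ := by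
  set M := 1 + (1 + ‖a‖) / r
  have hM : 0 < M := by positivity
  have hd : 0 < dist a y := hr.trans_le hy
  calc (dist a y ^ p)⁻¹ = M ^ p * ((M * dist a y) ^ p)⁻¹ := by
        rw [Real.mul_rpow hM.le hd.le, mul_inv, ← mul_assoc,
          mul_inv_cancel₀ (Real.rpow_pos_of_pos hM p).ne', one_mul]
    _ ≤ M ^ p * ((1 + ‖y‖) ^ p)⁻¹ := by
        gcongr
        exact one_add_norm_le_mul_dist hr hy

variable [NormedSpace ℝ E] [FiniteDimensional ℝ E] [MeasurableSpace E] [BorelSpace E]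

lemma integrableOn_inv_rpow_dist (μ : Measure E) [μ.IsAddHaarMeasure] {p : ℝ}
    (hp : (Module.finrank ℝ E : ℝ) < p) (a : E) {r : ℝ} (hr : 0 < r) :
    IntegrableOn (fun y => (dist a y ^ p)⁻¹) {y | r ≤ dist a y} μ := by
  have hp0 : 0 ≤ p := (Nat.cast_nonneg _).trans hp.le
  refine ((integrable_one_add_norm (μ := μ) hp).const_mul
    ((1 + (1 + ‖a‖) / r) ^ p)).integrableOn.mono' (by fun_prop) ?_
  refine (ae_restrict_iff' (measurableSet_le (by fun_prop) (by fun_prop))).2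
    (.of_forall fun y hy => ?_)
  rw [Real.norm_of_nonneg (by positivity), Real.rpow_neg (by positivity)]
  exact inv_rpow_dist_le hr hy hp0

end Integrability

section WeightedSpace

variable {n : ℕ} [NeZero n] {σ r : ℝ} {W : En n → ℝ}

lemma MemL.integrableOn_div_rpow_dist (hW : MemL n σ W) (hσ : 0 < σ) (a : En n) (hr : 0 < r) :
    IntegrableOn (fun y => W y / dist a y ^ ((n : ℝ) + σ)) {y | r ≤ dist a y} := by
  set p : ℝ := n + σ
  have hp1 : 1 ≤ p := by
    have : (1 : ℝ) ≤ n := Nat.one_le_cast.2 (Nat.pos_of_ne_zero (NeZero.ne n))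
    linarith
  have hmeas : Measurable fun y => dist a y ^ p := by fun_prop
  refine (hW.2.const_mul ((1 + (1 + ‖a‖) / r) ^ p)).integrableOn.mono'
    (hW.1.aestronglyMeasurable.aemeasurable.div hmeas.aemeasurable).aestronglyMeasurable.restrict ?_
  refine (ae_restrict_iff' (measurableSet_le (by fun_prop) (by fun_prop))).2
    (.of_forall fun y hy => ?_)
  have hsuper : 1 + ‖y‖ ^ p ≤ (1 + ‖y‖) ^ p := by
    simpa using Real.add_rpow_le_rpow_add zero_le_one (norm_nonneg y) hp1
  calc ‖W y / dist a y ^ p‖ = |W y| * (dist a y ^ p)⁻¹ := by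
        rw [Real.norm_eq_abs, abs_div, abs_of_nonneg (Real.rpow_nonneg dist_nonneg p),
          div_eq_mul_inv]
    _ ≤ |W y| * ((1 + (1 + ‖a‖) / r) ^ p * ((1 + ‖y‖) ^ p)⁻¹) := by
        gcongr
        exact inv_rpow_dist_le hr hy (by linarith)
    _ ≤ |W y| * ((1 + (1 + ‖a‖) / r) ^ p * (1 + ‖y‖ ^ p)⁻¹) := by gcongr
    _ = (1 + (1 + ‖a‖) / r) ^ p * (|W y| / (1 + ‖y‖ ^ p)) := by ring

lemma MemL.integrableOn_affine_div_rpow_dist (hW : MemL n σ W) (hσ : 0 < σ) (c s : ℝ)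
    (a : En n) (hr : 0 < r) :
    IntegrableOn (fun y => (c + s * W y) / dist a y ^ ((n : ℝ) + σ)) {y | r ≤ dist a y} := by
  have hp : (Module.finrank ℝ (En n) : ℝ) < n + σ := by
    rw [finrank_euclideanSpace_fin]; linarith
  refine IntegrableOn.congr_fun (((integrableOn_inv_rpow_dist volume hp a hr).const_mul c).add
    ((hW.integrableOn_div_rpow_dist hσ a hr).const_mul s)) (fun y _ => ?_)
    (measurableSet_le (by fun_prop) (by fun_prop))
  simp only [Pi.add_apply]
  ring

end WeightedSpace

section Truncation

variable {n : ℕ} [NeZero n]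

lemma preimage_reflPt_truncated_diff_halfSpace {l ε : ℝ} {x : En n} (hε : ε ≤ l - x 0) :
    reflPt n l ⁻¹' ({y | ε ≤ dist x y} \ halfSpace n l) = {z | z 0 ≤ l} := by
  ext z
  simp only [mem_preimage, Set.mem_sdiff, mem_ofPred_eq, halfSpace, reflPt_apply_zero, not_lt]
  refine ⟨fun h => by linarith [h.2], fun hz => ⟨?_, by linarith⟩⟩
  calc ε ≤ |x 0 - reflPt n l z 0| := by
        rw [reflPt_apply_zero, abs_sub_comm]; exact le_abs.2 (.inl (by linarith))
    _ ≤ dist x (reflPt n l z) := abs_sub_apply_le_dist _ _ _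

lemma setIntegral_truncated_diff_halfSpace {l ε : ℝ} {x : En n} (hε : ε ≤ l - x 0)
    (f : En n → ℝ) :
    ∫ y in {y | ε ≤ dist x y} \ halfSpace n l, f y = ∫ z in {z | z 0 ≤ l}, f (reflPt n l z) := by
  rw [← preimage_reflPt_truncated_diff_halfSpace hε]
  exact ((measurePreserving_reflPt l).setIntegral_preimage_emb
    (isometry_reflPt l).isClosedEmbedding.measurableEmbedding f _).symm

variable {σ l ε : ℝ} {W : En n → ℝ} {xb : En n}

lemma truncated_fracLap_integral_le (hσ : 0 < σ) (hW : MemL n σ W)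
    (hanti : ∀ x, W (reflPt n l x) = -W x) (hmin : ∀ y ∈ halfSpace n l, W xb ≤ W y)
    (hxb : W xb ≤ 0) (hε : 0 < ε) (hεl : ε ≤ l - xb 0) (hball : ∀ y ∈ ball xb ε, W y ≤ 0) :
    ∫ y in {y | ε ≤ dist xb y}, (W xb - W y) / dist xb y ^ ((n : ℝ) + σ) ≤
      2 * W xb * ∫ y in {y | ε ≤ dist xb y} ∩ halfSpace n l,
        (dist (reflPt n l xb) y ^ ((n : ℝ) + σ))⁻¹ := by
  set p : ℝ := n + σ
  set A := {y : En n | ε ≤ dist xb y}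
  set H := {z : En n | z 0 ≤ l}
  set R := reflPt n l xb
  have hA : MeasurableSet A := measurableSet_le measurable_const (by fun_prop)
  have hS : MeasurableSet (halfSpace n l) := measurableSet_lt (by fun_prop) measurable_const
  have hASH : A ∩ halfSpace n l ⊆ H := fun y hy => show y 0 ≤ l from le_of_lt hy.2
  have hHR : H ⊆ {z | l - xb 0 ≤ dist R z} := fun _ hz => sub_le_dist_reflPt hz
  have integrableOn_H (s : ℝ) : IntegrableOn (fun z => (W xb + s * W z) / dist R z ^ p) H :=
    (hW.integrableOn_affine_div_rpow_dist hσ (W xb) s R (hε.trans_le hεl)).mono_set hHR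
  have hfA : IntegrableOn (fun y => (W xb - W y) / dist xb y ^ p) A := by
    simpa [sub_eq_add_neg] using hW.integrableOn_affine_div_rpow_dist hσ (W xb) (-1) xb hε
  have hgH : IntegrableOn (fun z => (W xb + W z) / dist R z ^ p) H := by
    simpa using integrableOn_H 1
  have hfRH : IntegrableOn (fun z => (W xb - W z) / dist R z ^ p) H := by
    simpa [sub_eq_add_neg] using integrableOn_H (-1)
  have reflect : ∫ y in A \ halfSpace n l, (W xb - W y) / dist xb y ^ p =
      ∫ z in H, (W xb + W z) / dist R z ^ p := by
    rw [setIntegral_truncated_diff_halfSpace hεl]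
    congr 1 with z
    rw [hanti, ← dist_reflPt_reflPt l xb, reflPt_involutive l z, sub_neg_eq_add]
  have compare : ∫ y in A ∩ halfSpace n l, (W xb - W y) / dist xb y ^ p ≤
      ∫ y in A ∩ halfSpace n l, (W xb - W y) / dist R y ^ p := by
    refine setIntegral_mono_on (hfA.mono_set inter_subset_left) (hfRH.mono_set hASH)
      (hA.inter hS) fun y ⟨hyA, hyS⟩ => ?_
    have hdist : dist xb y ≤ dist R y :=
      dist_le_dist_reflPt (by linarith) (le_of_lt hyS)
    rw [div_eq_mul_inv, div_eq_mul_inv]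
    exact mul_le_mul_of_nonpos_left
      (inv_anti₀ (Real.rpow_pos_of_pos (hε.trans_le hyA) p) (by gcongr)) (by linarith [hmin y hyS])
  have near : ∫ z in H \ (A ∩ halfSpace n l), (W xb + W z) / dist R z ^ p ≤ 0 := by
    refine setIntegral_nonpos ((measurableSet_le (by fun_prop) measurable_const).diff
      (hA.inter hS)) fun z ⟨(hzH : z 0 ≤ l), hz⟩ => ?_
    have hWz : W z ≤ 0 := by
      by_cases hzA : z ∈ A
      · have hzl : z 0 = l := le_antisymm hzH (not_lt.1 fun h => hz ⟨hzA, h⟩)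
        have := hanti z
        rw [reflPt_eq_self hzl] at this
        linarith
      · exact hball z (by rw [mem_ball, dist_comm]; exact not_le.1 hzA)
    exact div_nonpos_of_nonpos_of_nonneg (by linarith) (by positivity)
  calc ∫ y in A, (W xb - W y) / dist xb y ^ p
      = (∫ y in A ∩ halfSpace n l, (W xb - W y) / dist xb y ^ p) +
          ∫ z in H, (W xb + W z) / dist R z ^ p := by
        rw [← reflect, integral_inter_add_sdiff hS hfA]
    _ ≤ (∫ y in A ∩ halfSpace n l, (W xb - W y) / dist R y ^ p) +
          ∫ z in A ∩ halfSpace n l, (W xb + W z) / dist R z ^ p := by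
        rw [← integral_inter_add_sdiff (hA.inter hS) hgH, inter_eq_right.2 hASH]
        linarith
    _ = 2 * W xb * ∫ y in A ∩ halfSpace n l, (dist R y ^ p)⁻¹ := by
        rw [← integral_add (hfRH.mono_set hASH) (hgH.mono_set hASH), ← integral_const_mul]
        congr 1 with y
        ring

end Truncation

def narrowConst (n : ℕ) (σ : ℝ) : ℝ :=
  volume.real (ball (0 : En n) 2⁻¹) * (5 ^ ((n : ℝ) + σ))⁻¹

lemma narrowConst_pos (n : ℕ) (σ : ℝ) : 0 < narrowConst n σ := by
  have : 0 < volume.real (ball (0 : En n) 2⁻¹) :=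
    ENNReal.toReal_pos (measure_ball_pos volume _ (by norm_num)).ne' measure_ball_lt_top.ne
  unfold narrowConst
  positivity

section Mass

variable {n : ℕ} [NeZero n]

lemma volume_real_ball_mul_half (c : En n) {δ : ℝ} (hδ : 0 ≤ δ) :
    volume.real (ball c (δ * 2⁻¹)) = δ ^ n * volume.real (ball (0 : En n) 2⁻¹) := by
  rw [measureReal_def, Measure.addHaar_ball_mul volume c hδ, ENNReal.toReal_mul,
    ENNReal.toReal_ofReal (by positivity), finrank_euclideanSpace_fin, measureReal_def]

lemma le_setIntegral_inv_rpow_dist_reflPt {σ l δ ε : ℝ} (hσ : 0 < σ) {x : En n} (hδ : 0 < δ)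
    (hxl : x 0 < l) (hδx : l - δ < x 0) (hεδ : ε ≤ δ) :
    narrowConst n σ * δ ^ (-σ) ≤ ∫ y in {y | ε ≤ dist x y} ∩ halfSpace n l,
      (dist (reflPt n l x) y ^ ((n : ℝ) + σ))⁻¹ := by
  set p : ℝ := n + σ
  set R := reflPt n l x
  set c : En n := x - (2 * δ) • EuclideanSpace.single 0 1
  have hxc : dist x c = 2 * δ := by
    rw [dist_eq_norm, sub_sub_cancel, norm_smul, PiLp.norm_single, norm_one, mul_one,
      Real.norm_of_nonneg (by positivity)]
  have hc0 : c 0 = x 0 - 2 * δ := by simp [c]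
  have hball (y : En n) (hy : y ∈ ball c (δ * 2⁻¹)) : δ ≤ dist x y ∧ y 0 < l := by
    rw [mem_ball] at hy
    have := abs_sub_apply_le_dist y c 0
    rw [hc0] at this
    exact ⟨by linarith [dist_triangle x y c],
      by linarith [le_abs_self (y 0 - (x 0 - 2 * δ))]⟩
  have hB : ball c (δ * 2⁻¹) ⊆ {y | ε ≤ dist x y} ∩ halfSpace n l := fun y hy =>
    ⟨hεδ.trans (hball y hy).1, (hball y hy).2⟩
  have hK : IntegrableOn (fun y => (dist R y ^ p)⁻¹) ({y | ε ≤ dist x y} ∩ halfSpace n l) := by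
    have hp : (Module.finrank ℝ (En n) : ℝ) < p := by
      rw [finrank_euclideanSpace_fin]; linarith
    exact (integrableOn_inv_rpow_dist volume hp R (sub_pos.2 hxl)).mono_set
      fun y hy => sub_le_dist_reflPt hy.2.le
  have hRy (y : En n) (hy : y ∈ ball c (δ * 2⁻¹)) : δ ≤ dist R y ∧ dist R y ≤ 5 * δ := by
    obtain ⟨hxy, hyl⟩ := hball y hy
    rw [mem_ball] at hy
    refine ⟨hxy.trans (dist_le_dist_reflPt hxl.le hyl.le), ?_⟩
    have hRx : dist R x = 2 * (l - x 0) := by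
      rw [dist_reflPt_self, abs_of_pos (sub_pos.2 hxl)]
    linarith [dist_triangle R x y, dist_triangle x c y, dist_comm c y]
  calc narrowConst n σ * δ ^ (-σ) = volume.real (ball c (δ * 2⁻¹)) * ((5 * δ) ^ p)⁻¹ := by
        rw [volume_real_ball_mul_half c hδ.le, narrowConst, Real.mul_rpow (by norm_num) hδ.le,
          Real.rpow_add hδ, Real.rpow_natCast, Real.rpow_neg hδ.le]
        field_simp
        rfl
    _ = ∫ y in ball c (δ * 2⁻¹), ((5 * δ) ^ p)⁻¹ := by rw [setIntegral_const, smul_eq_mul]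
    _ ≤ ∫ y in ball c (δ * 2⁻¹), (dist R y ^ p)⁻¹ := by
        refine setIntegral_mono_on (integrableOn_const measure_ball_lt_top.ne) (hK.mono_set hB)
          measurableSet_ball fun y hy => ?_
        obtain ⟨hδR, hR5⟩ := hRy y hy
        exact inv_anti₀ (Real.rpow_pos_of_pos (hδ.trans_le hδR) p) (by gcongr)
    _ ≤ _ := setIntegral_mono_set hK (.of_forall fun y => by positivity) hB.eventuallyLE

end Mass

lemma C11loc.continuous {n : ℕ} {w : En n → ℝ} (hw : C11loc n w) : Continuous w :=
  continuous_iff_continuousAt.2 fun x =>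
    let ⟨_, hε, _, _, hdiff, _⟩ := hw x (mem_univ x)
    (hdiff x (mem_ball_self hε)).continuousAt

theorem statement8_general
    (n : ℕ) [NeZero n]
    (σ : ℝ) (hσ : 0 < σ ∧ σ < 2) :
    ∃ c > 0, ∀ (lam δ cns : ℝ), 0 < δ → 0 < cns →
      ∀ (W : En n → ℝ), C11loc n W → MemL n σ W →
      (∀ x, W (reflPt n lam x) = -W x) →
      ∀ xb : En n, lam - δ < xb 0 → xb 0 < lam →
      (∀ y ∈ halfSpace n lam, W xb ≤ W y) → W xb < 0 →
      ∀ L, HasFracLap n σ cns W xb L →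
        L ≤ c * cns * δ ^ (-σ) * W xb ∧
        c * cns * δ ^ (-σ) * W xb < 0 := by
  have hc := narrowConst_pos n σ
  refine ⟨2 * narrowConst n σ, by positivity, fun lam δ cns hδ hcns W hW hWL hanti xb hxδ hxl
    hmin hneg L hL => ⟨le_of_tendsto hL ?_, mul_neg_of_pos_of_neg (by positivity) hneg⟩⟩
  obtain ⟨r, hr, hWr⟩ := Metric.mem_nhds_iff.1
    (hW.continuous.continuousAt.preimage_mem_nhds (Iic_mem_nhds hneg))
  filter_upwards [Ioo_mem_nhdsGT (lt_min hr (sub_pos.2 hxl))] with ε ⟨hε, hεr⟩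
  have hmass := le_setIntegral_inv_rpow_dist_reflPt hσ.1 hδ hxl hxδ
    (ε := ε) (by linarith [min_le_right r (lam - xb 0)])
  calc cns * ∫ y in {y | ε ≤ dist xb y}, (W xb - W y) / dist xb y ^ ((n : ℝ) + σ)
      ≤ cns * (2 * W xb * (narrowConst n σ * δ ^ (-σ))) := by
        gcongr
        refine (truncated_fracLap_integral_le hσ.1 hWL hanti hmin hneg.le hε
          (hεr.le.trans (min_le_right _ _)) fun y hy =>
            hWr (ball_subset_ball (hεr.le.trans (min_le_left _ _)) hy)).trans ?_
        exact mul_le_mul_of_nonpos_left hmass (by linarith)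
    _ = 2 * narrowConst n σ * cns * δ ^ (-σ) * W xb := by ring

/-- (the narrow-region estimate (n-2): at a negative minimum
attained in the slab `{λ - δ < x₁ < λ}`, the fractional Laplacian is bounded by
`c C_{n,σ} δ^{-σ} W(x̄) < 0`, with `c` depending only on `n, σ`). -/
theorem statement8
    (n : ℕ) [NeZero n] (hn : 2 ≤ n)
    (σ : ℝ) (hσ : 0 < σ ∧ σ < 2) :
    ∃ c > 0, ∀ (lam δ cns : ℝ), 0 < δ → 0 < cns →
      ∀ (W : En n → ℝ), C11loc n W → MemL n σ W →
      (∀ x, W (reflPt n lam x) = -W x) →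
      ∀ xb : En n, lam - δ < xb 0 → xb 0 < lam →
      (∀ y ∈ halfSpace n lam, W xb ≤ W y) → W xb < 0 →
      ∀ L, HasFracLap n σ cns W xb L →
        L ≤ c * cns * δ ^ (-σ) * W xb ∧
        c * cns * δ ^ (-σ) * W xb < 0 :=
  statement8_general n σ hσ
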